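/- Necessary pruning condition for the 1-norm. Let D be a decision tree over ℝ^m in which every internal node condition is a single-feature threshold comparison of the form x'_i ≤ t. Fix a leaf l of D, an input x ∈ ℝ^m, and ε ≥ 0. For each coordinate i ∈ {1, …, m} let S_i ⊆ ℝ be the set of values v satisfying every threshold condition on coordinate i appearing on the path from the root to l in the polarity of the branch taken, and define d_i = inf { |x_i − v| : v ∈ S_i } if coordinate i appears on the path and d_i = 0 otherwise. If there exists x' ∈ ℝ^m with Σ_{i=1}^m |x_i − x'_i| ≤ ε such that the valuation traversal of D on x' reaches leaf l, then every S_i for a coordinate i appearing on the path is nonempty and Σ_{i=1}^m d_i ≤ ε. -/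

import Mathlib

/-- A decision tree over `ℝ^m` in which every internal node condition is a single-feature
threshold comparison `x'_i ≤ t`: an internal node carries a coordinate `i` and a threshold
`t`, a leaf carries a real weight. -/
inductive TTree (m : ℕ) : Type where
  | leaf (w : ℝ) : TTree m
  | node (i : Fin m) (t : ℝ) (pos neg : TTree m) : TTree m

namespace TTree

variable {m : ℕ}

/-- The root-to-leaf path (as a list of branch choices, `true` = positive child) followed
by the valuation traversal of `D` on input `x'`: at an internal node with condition
`x'_i ≤ t`, go to the positive child if `x' i ≤ t` and to the negative child otherwise. -/
noncomputable def traverse : TTree m → (Fin m → ℝ) → List Bool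
  | leaf _, _ => []
  | node i t p n, x => if x i ≤ t then true :: p.traverse x else false :: n.traverse x

/-- `l` identifies a leaf of `D` (i.e. `l` is a valid root-to-leaf path). -/
def IsLeaf : TTree m → List Bool → Prop
  | leaf _, [] => True
  | node _ _ p _, true :: l => p.IsLeaf l
  | node _ _ _ n, false :: l => n.IsLeaf l
  | _, _ => False

/-- The threshold conditions appearing on the root-to-leaf path `l`, each recorded as
`(coordinate, threshold, polarity of the branch taken)`. -/
def pathConds : TTree m → List Bool → List (Fin m × ℝ × Bool)
  | node i t p _, true :: l => (i, t, true) :: p.pathConds l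
  | node i t _ n, false :: l => (i, t, false) :: n.pathConds l
  | _, _ => []

/-- `S_i`: the set of values `v` satisfying every threshold condition on coordinate `i`
appearing on the path from the root to `l`, in the polarity of the branch taken
(`v ≤ t` for positive branches, `v > t` for negative branches).  If coordinate `i` does
not appear on the path then `S_i = ℝ`. -/
def S (D : TTree m) (l : List Bool) (i : Fin m) : Set ℝ :=
  {v : ℝ | ∀ p ∈ D.pathConds l, p.1 = i → (if p.2.2 then v ≤ p.2.1 else p.2.1 < v)}

end TTree

/-- Coordinate `i` appears (in some threshold condition) on the path from the root to `l`. -/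
def appearsOn {m : ℕ} (D : TTree m) (l : List Bool) (i : Fin m) : Prop :=
  ∃ p ∈ D.pathConds l, p.1 = i

open Classical in
/-- `d_i = inf { |x_i − v| : v ∈ S_i }` if coordinate `i` appears on the path from the
root to `l`, and `d_i = 0` otherwise. -/
noncomputable def d {m : ℕ} (D : TTree m) (l : List Bool) (x : Fin m → ℝ) (i : Fin m) : ℝ :=
  if appearsOn D l i then sInf {r : ℝ | ∃ v ∈ TTree.S D l i, r = |x i - v|} else 0

namespace TTree

variable {m : ℕ}

theorem pathConds_traverse_holds (D : TTree m) (x : Fin m → ℝ) :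
    ∀ c ∈ D.pathConds (D.traverse x), if c.2.2 then x c.1 ≤ c.2.1 else c.2.1 < x c.1 := by
  induction D with
  | leaf w => simp [pathConds]
  | node i t pos neg ihPos ihNeg =>
    by_cases hx : x i ≤ t
    · simpa [traverse, pathConds, hx] using ihPos
    · simpa [traverse, pathConds, hx, not_le.mp hx] using ihNeg

theorem mem_S_traverse (D : TTree m) (x : Fin m → ℝ) (i : Fin m) :
    x i ∈ D.S (D.traverse x) i := by
  rintro c hc rfl
  exact D.pathConds_traverse_holds x c hc

end TTree

theorem d_le_abs_sub_of_mem_S {m : ℕ} {D : TTree m} {l : List Bool} (x : Fin m → ℝ)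
    {i : Fin m} {v : ℝ} (hv : v ∈ D.S l i) : d D l x i ≤ |x i - v| := by
  unfold d
  split_ifs
  · refine csInf_le ⟨0, ?_⟩ ⟨v, hv, rfl⟩
    rintro r ⟨w, -, rfl⟩
    exact abs_nonneg _
  · exact abs_nonneg _

theorem pruning_necessary_one_norm_general {m : ℕ} (D : TTree m) (l : List Bool)
    (x : Fin m → ℝ) (ε : ℝ)
    (h : ∃ x' : Fin m → ℝ, (∑ i : Fin m, |x i - x' i|) ≤ ε ∧ D.traverse x' = l) :
    (∀ i : Fin m, appearsOn D l i → (TTree.S D l i).Nonempty) ∧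
    (∑ i : Fin m, d D l x i) ≤ ε := by
  obtain ⟨x', hdist, rfl⟩ := h
  refine ⟨fun i _ => ⟨x' i, D.mem_S_traverse x' i⟩, ?_⟩
  calc ∑ i, d D (D.traverse x') x i ≤ ∑ i, |x i - x' i| :=
        Finset.sum_le_sum fun i _ => d_le_abs_sub_of_mem_S x (D.mem_S_traverse x' i)
    _ ≤ ε := hdist

/-- **Necessary pruning condition for the `1`-norm.** Let `D` be a decision tree over
`ℝ^m` with single-feature threshold conditions, `l` a leaf of `D`, `x ∈ ℝ^m` and `ε ≥ 0`.
If there exists `x'` with `Σᵢ |x_i − x'_i| ≤ ε` whose valuation traversal reaches leaf `l`,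
then every `S_i` for a coordinate `i` appearing on the path is nonempty, and
`Σᵢ d_i ≤ ε`. -/
theorem pruning_necessary_one_norm {m : ℕ} (D : TTree m) (l : List Bool)
    (hl : D.IsLeaf l) (x : Fin m → ℝ) (ε : ℝ) (hε : 0 ≤ ε)
    (h : ∃ x' : Fin m → ℝ, (∑ i : Fin m, |x i - x' i|) ≤ ε ∧ D.traverse x' = l) :
    (∀ i : Fin m, appearsOn D l i → (TTree.S D l i).Nonempty) ∧
    (∑ i : Fin m, d D l x i) ≤ ε :=
  pruning_necessary_one_norm_general D l x ε h
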